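/- arXiv:2605.07571 — 4 statements merged into one kernel-verified Lean document; each statement's English description precedes it below -/
import Mathlib

section
/- For every real K ∈ (0,2) with K ≠ 1, the integral ∫₀^∞ (1 − e^{−θ})² θ^{−(1+K)} dθ equals Γ(2−K) · (2^K − 2)/(K(K−1)). -/
/-!
Integrating by parts against `θ ^ (-(1 + K)) = (θ ^ (-K) / (-K))'` and then against
`θ ^ (-K) = (θ ^ (1 - K) / (1 - K))'` turns the integrand into
`2 / (K * (K - 1)) * (2 * exp (-(2 * θ)) - exp (-θ)) * θ ^ (1 - K)`, whose integral is a
combination of Gamma integrals `∫ θ ^ (1 - K) * exp (-(r * θ)) = r ^ (K - 2) * Γ(2 - K)`.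
All boundary terms vanish for `0 < K < 2` because `0 ≤ 1 - exp (-θ) ≤ min θ 1`.
-/

open Real Set Filter MeasureTheory Topology

namespace Real

lemma one_sub_exp_neg_nonneg {θ : ℝ} (hθ : 0 ≤ θ) : 0 ≤ 1 - exp (-θ) := by
  linarith [exp_le_one_iff.mpr (neg_nonpos.mpr hθ)]

lemma one_sub_exp_neg_le_self (θ : ℝ) : 1 - exp (-θ) ≤ θ := by
  linarith [add_one_le_exp (-θ)]

lemma one_sub_exp_neg_le_one (θ : ℝ) : 1 - exp (-θ) ≤ 1 := by
  linarith [exp_pos (-θ)]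

lemma exp_neg_sub_exp_neg_two_mul (θ : ℝ) :
    exp (-θ) - exp (-(2 * θ)) = exp (-θ) * (1 - exp (-θ)) := by
  rw [mul_sub, mul_one, ← exp_add]; ring_nf

lemma tendsto_rpow_nhdsGT_zero {p : ℝ} (hp : 0 < p) :
    Tendsto (fun x : ℝ => x ^ p) (𝓝[>] 0) (𝓝 0) := by
  have h := (continuousAt_rpow_const 0 p (Or.inr hp.le)).tendsto
  rw [zero_rpow hp.ne'] at h
  exact h.mono_left nhdsWithin_le_nhds

lemma sq_mul_rpow {θ : ℝ} (hθ : 0 < θ) (a : ℝ) : θ ^ 2 * θ ^ a = θ ^ (a + 2) := by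
  simpa [mul_comm] using (rpow_add_natCast hθ.ne' a 2).symm

lemma integrableOn_rpow_mul_exp_neg_mul {a r : ℝ} (ha : -1 < a) (hr : 0 < r) :
    IntegrableOn (fun t : ℝ => t ^ a * exp (-(r * t))) (Ioi 0) := by
  refine (integrableOn_rpow_mul_exp_neg_mul_rpow ha one_pos hr).congr_fun (fun t _ => ?_)
    measurableSet_Ioi
  simp only [rpow_one, neg_mul]

theorem integral_Ioi_mul_rpow_sub_one_eq {f f' : ℝ → ℝ} {s : ℝ} (hs : s ≠ 0)
    (hf : ∀ x ∈ Ioi (0 : ℝ), HasDerivAt f (f' x) x)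
    (hint : IntegrableOn (fun x => f x * x ^ (s - 1)) (Ioi 0))
    (hint' : IntegrableOn (fun x => f' x * x ^ s) (Ioi 0))
    (h0 : Tendsto (fun x => f x * x ^ s) (𝓝[>] 0) (𝓝 0))
    (htop : Tendsto (fun x => f x * x ^ s) atTop (𝓝 0)) :
    ∫ x in Ioi 0, f x * x ^ (s - 1) = -(∫ x in Ioi 0, f' x * x ^ s) / s := by
  have hv : ∀ x ∈ Ioi (0 : ℝ), HasDerivAt (fun x => x ^ s / s) (x ^ (s - 1)) x :=
    fun x hx => by
      simpa [mul_div_cancel_left₀ _ hs] using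
        (hasDerivAt_rpow_const (p := s) (Or.inl (ne_of_gt hx))).div_const s
  have hfv : (f * fun x => x ^ s / s) = fun x => f x * x ^ s / s := by
    ext x; simp [mul_div_assoc]
  have hibp := integral_Ioi_mul_deriv_eq_deriv_mul hf hv hint
    (by simp only [Pi.mul_def, ← mul_div_assoc]; exact hint'.div_const s)
    (by simpa [hfv] using h0.div_const s) (by simpa [hfv] using htop.div_const s)
  simp only [hibp, sub_zero, zero_sub, ← mul_div_assoc, integral_div, neg_div]

lemma hasDerivAt_sq_one_sub_exp_neg (x : ℝ) :
    HasDerivAt (fun θ => (1 - exp (-θ)) ^ 2) (2 * (exp (-x) - exp (-(2 * x)))) x := by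
  refine (((hasDerivAt_neg x).exp.const_sub 1).pow 2).congr_deriv ?_
  rw [exp_neg_sub_exp_neg_two_mul]; push_cast; ring

lemma hasDerivAt_exp_neg_sub_exp_neg_two_mul (x : ℝ) :
    HasDerivAt (fun θ => exp (-θ) - exp (-(2 * θ))) (2 * exp (-(2 * x)) - exp (-x)) x := by
  refine ((hasDerivAt_neg x).exp.sub ((hasDerivAt_id x).const_mul 2).neg.exp).congr_deriv ?_
  simp only [id, mul_one, Pi.neg_apply]; ring

section

variable {K : ℝ}

lemma integrableOn_exp_neg_sub_exp_neg_two_mul_mul_rpow (hK2 : K < 2) :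
    IntegrableOn (fun θ : ℝ => (exp (-θ) - exp (-(2 * θ))) * θ ^ (-K)) (Ioi 0) := by
  refine (integrableOn_rpow_mul_exp_neg_mul (a := 1 - K) (by linarith) one_pos).mono'
    (by fun_prop : Measurable _).aestronglyMeasurable ?_
  filter_upwards [ae_restrict_mem measurableSet_Ioi] with θ (hθ : 0 < θ)
  have := one_sub_exp_neg_nonneg hθ.le
  rw [exp_neg_sub_exp_neg_two_mul, one_mul, norm_of_nonneg (by positivity)]
  calc exp (-θ) * (1 - exp (-θ)) * θ ^ (-K) ≤ exp (-θ) * θ * θ ^ (-K) := by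
        gcongr; exact one_sub_exp_neg_le_self θ
    _ = θ ^ (1 - K) * exp (-θ) := by
        rw [sub_eq_neg_add, rpow_add_one hθ.ne']; ring

lemma integrableOn_sq_one_sub_exp_neg_mul_rpow (hK0 : 0 < K) (hK2 : K < 2) :
    IntegrableOn (fun θ : ℝ => (1 - exp (-θ)) ^ 2 * θ ^ (-(1 + K))) (Ioi 0) := by
  have hmeas : ∀ s : Set ℝ, AEStronglyMeasurable
      (fun θ : ℝ => (1 - exp (-θ)) ^ 2 * θ ^ (-(1 + K))) (volume.restrict s) :=
    fun _ => (by fun_prop : Measurable _).aestronglyMeasurable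
  rw [← Ioc_union_Ioi_eq_Ioi zero_le_one]
  refine IntegrableOn.union ?_ ?_
  · have hdom : IntegrableOn (fun θ : ℝ => θ ^ (1 - K)) (Ioc 0 1) := by
      rw [← intervalIntegrable_iff_integrableOn_Ioc_of_le zero_le_one]
      exact intervalIntegral.intervalIntegrable_rpow' (by linarith)
    refine hdom.mono' (hmeas _) ?_
    filter_upwards [ae_restrict_mem measurableSet_Ioc] with θ ⟨hθ, _⟩
    rw [norm_of_nonneg (by positivity)]
    calc (1 - exp (-θ)) ^ 2 * θ ^ (-(1 + K)) ≤ θ ^ 2 * θ ^ (-(1 + K)) := by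
          gcongr
          · exact one_sub_exp_neg_nonneg hθ.le
          · exact one_sub_exp_neg_le_self θ
      _ = θ ^ (1 - K) := by rw [sq_mul_rpow hθ]; ring_nf
  · refine (integrableOn_Ioi_rpow_of_lt (a := -(1 + K)) (by linarith) zero_lt_one).mono'
      (hmeas _) ?_
    filter_upwards [ae_restrict_mem measurableSet_Ioi] with θ (hθ : 1 < θ)
    have := one_sub_exp_neg_nonneg (zero_le_one.trans hθ.le)
    rw [norm_of_nonneg (by positivity)]
    calc (1 - exp (-θ)) ^ 2 * θ ^ (-(1 + K)) ≤ 1 ^ 2 * θ ^ (-(1 + K)) := by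
          gcongr; exact one_sub_exp_neg_le_one θ
      _ = θ ^ (-(1 + K)) := by rw [one_pow, one_mul]

lemma integrableOn_two_exp_neg_two_mul_sub_exp_neg_mul_rpow (hK2 : K < 2) :
    IntegrableOn (fun θ : ℝ => (2 * exp (-(2 * θ)) - exp (-θ)) * θ ^ (1 - K)) (Ioi 0) := by
  have hint := fun r (hr : (0 : ℝ) < r) =>
    integrableOn_rpow_mul_exp_neg_mul (a := 1 - K) (by linarith) hr
  refine IntegrableOn.congr_fun (((hint 2 two_pos).const_mul 2).sub (hint 1 one_pos))
    (fun θ _ => ?_) measurableSet_Ioi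
  simp only [Pi.sub_apply, one_mul]; ring

lemma integral_two_exp_neg_two_mul_sub_exp_neg_mul_rpow (hK2 : K < 2) :
    ∫ θ in Ioi 0, (2 * exp (-(2 * θ)) - exp (-θ)) * θ ^ (1 - K)
      = Gamma (2 - K) * (2 ^ (K - 1) - 1) := by
  have h2K : 0 < 2 - K := by linarith
  have hint := fun r (hr : (0 : ℝ) < r) =>
    integrableOn_rpow_mul_exp_neg_mul (a := 2 - K - 1) (by linarith) hr
  have hhalf : (1 / 2 : ℝ) ^ (2 - K) * 2 = 2 ^ (K - 1) := by
    rw [one_div, inv_rpow zero_le_two, ← rpow_neg zero_le_two, ← rpow_add_one two_ne_zero]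
    ring_nf
  calc ∫ θ in Ioi 0, (2 * exp (-(2 * θ)) - exp (-θ)) * θ ^ (1 - K)
      = ∫ θ in Ioi 0, (2 * (θ ^ (2 - K - 1) * exp (-(2 * θ)))
          - θ ^ (2 - K - 1) * exp (-(1 * θ))) := by
        refine setIntegral_congr_fun measurableSet_Ioi fun θ _ => ?_
        ring_nf
    _ = Gamma (2 - K) * (2 ^ (K - 1) - 1) := by
        rw [integral_sub ((hint 2 two_pos).const_mul 2) (hint 1 one_pos), integral_const_mul,
          integral_rpow_mul_exp_neg_mul_Ioi h2K two_pos,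
          integral_rpow_mul_exp_neg_mul_Ioi h2K one_pos, ← hhalf]
        simp only [div_one, one_rpow]
        ring

lemma integral_exp_neg_sub_exp_neg_two_mul_mul_rpow (hK2 : K < 2) (hK1 : K ≠ 1) :
    ∫ θ in Ioi 0, (exp (-θ) - exp (-(2 * θ))) * θ ^ (-K)
      = Gamma (2 - K) * (2 ^ (K - 1) - 1) / (K - 1) := by
  have hs : 1 - K ≠ 0 := sub_ne_zero.2 hK1.symm
  have h2K : 0 < 2 - K := by linarith
  have h0 :
      Tendsto (fun θ => (exp (-θ) - exp (-(2 * θ))) * θ ^ (1 - K)) (𝓝[>] 0) (𝓝 0) := by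
    refine squeeze_zero' ?_ ?_ (tendsto_rpow_nhdsGT_zero h2K)
    all_goals filter_upwards [self_mem_nhdsWithin] with θ (hθ : 0 < θ)
    · have := one_sub_exp_neg_nonneg hθ.le
      rw [exp_neg_sub_exp_neg_two_mul]; positivity
    · calc (exp (-θ) - exp (-(2 * θ))) * θ ^ (1 - K) ≤ 1 * θ * θ ^ (1 - K) := by
            rw [exp_neg_sub_exp_neg_two_mul]
            gcongr
            · exact one_sub_exp_neg_nonneg hθ.le
            · exact exp_le_one_iff.2 (by linarith)
            · exact one_sub_exp_neg_le_self θ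
        _ = θ ^ (2 - K) := by
            rw [show 2 - K = 1 - K + 1 by ring, rpow_add_one hθ.ne']; ring
  have htop : Tendsto (fun θ => (exp (-θ) - exp (-(2 * θ))) * θ ^ (1 - K)) atTop (𝓝 0) := by
    refine squeeze_zero' ?_ ?_ (tendsto_rpow_mul_exp_neg_mul_atTop_nhds_zero (1 - K) 1 one_pos)
    all_goals filter_upwards [eventually_gt_atTop 0] with θ hθ
    · have := one_sub_exp_neg_nonneg hθ.le
      rw [exp_neg_sub_exp_neg_two_mul]; positivity
    · rw [exp_neg_sub_exp_neg_two_mul, neg_mul, one_mul, mul_comm]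
      have := one_sub_exp_neg_nonneg hθ.le
      gcongr
      exact mul_le_of_le_one_right (exp_pos _).le (one_sub_exp_neg_le_one θ)
  rw [show -K = 1 - K - 1 by ring, integral_Ioi_mul_rpow_sub_one_eq hs
    (fun x _ => hasDerivAt_exp_neg_sub_exp_neg_two_mul x)
    (by simpa only [show 1 - K - 1 = -K by ring] using
      integrableOn_exp_neg_sub_exp_neg_two_mul_mul_rpow hK2)
    (integrableOn_two_exp_neg_two_mul_sub_exp_neg_mul_rpow hK2) h0 htop,
    integral_two_exp_neg_two_mul_sub_exp_neg_mul_rpow hK2]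
  field_simp
  ring

lemma integral_sq_one_sub_exp_neg_mul_rpow (hK0 : 0 < K) (hK2 : K < 2) :
    ∫ θ in Ioi 0, (1 - exp (-θ)) ^ 2 * θ ^ (-(1 + K))
      = 2 / K * ∫ θ in Ioi 0, (exp (-θ) - exp (-(2 * θ))) * θ ^ (-K) := by
  have h0 : Tendsto (fun θ => (1 - exp (-θ)) ^ 2 * θ ^ (-K)) (𝓝[>] 0) (𝓝 0) := by
    refine squeeze_zero' ?_ ?_ (tendsto_rpow_nhdsGT_zero (by linarith : 0 < 2 - K))
    all_goals filter_upwards [self_mem_nhdsWithin] with θ (hθ : 0 < θ)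
    · positivity
    · calc (1 - exp (-θ)) ^ 2 * θ ^ (-K) ≤ θ ^ 2 * θ ^ (-K) := by
            gcongr
            · exact one_sub_exp_neg_nonneg hθ.le
            · exact one_sub_exp_neg_le_self θ
        _ = θ ^ (2 - K) := by rw [sq_mul_rpow hθ]; ring_nf
  have htop : Tendsto (fun θ => (1 - exp (-θ)) ^ 2 * θ ^ (-K)) atTop (𝓝 0) := by
    refine squeeze_zero' ?_ ?_ (tendsto_rpow_neg_atTop hK0)
    all_goals filter_upwards [eventually_gt_atTop 0] with θ hθ
    · positivity
    · have := one_sub_exp_neg_nonneg hθ.le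
      calc (1 - exp (-θ)) ^ 2 * θ ^ (-K) ≤ 1 ^ 2 * θ ^ (-K) := by
            gcongr; exact one_sub_exp_neg_le_one θ
        _ = θ ^ (-K) := by rw [one_pow, one_mul]
  rw [show -(1 + K) = -K - 1 by ring, integral_Ioi_mul_rpow_sub_one_eq (neg_ne_zero.2 hK0.ne')
    (fun x _ => hasDerivAt_sq_one_sub_exp_neg x)
    (by simpa only [show -K - 1 = -(1 + K) by ring] using
      integrableOn_sq_one_sub_exp_neg_mul_rpow hK0 hK2)
    (by simp only [mul_assoc]; exact
      (integrableOn_exp_neg_sub_exp_neg_two_mul_mul_rpow hK2).const_mul 2) h0 htop]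
  simp only [mul_assoc, integral_const_mul]
  field_simp

end

end Real

theorem stmt_4 (K : ℝ) (hK0 : 0 < K) (hK2 : K < 2) (hK1 : K ≠ 1) :
    ∫ θ in Set.Ioi (0:ℝ), (1 - Real.exp (-θ)) ^ 2 * θ ^ (-(1 + K))
      = Real.Gamma (2 - K) * (((2:ℝ) ^ K - 2) / (K * (K - 1))) := by
  have h2 : (2 : ℝ) ^ K = 2 * 2 ^ (K - 1) := by
    rw [← rpow_one_add' zero_le_two (by linarith)]; ring_nf
  rw [integral_sq_one_sub_exp_neg_mul_rpow hK0 hK2,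
    integral_exp_neg_sub_exp_neg_two_mul_mul_rpow hK2 hK1, h2]
  have : K - 1 ≠ 0 := sub_ne_zero.2 hK1
  field_simp
end

section
/- Let H ∈ (0,1) and K ∈ (0,2). For all reals h, t with 0 < h < 1/2 and 0 ≤ t ≤ h, one has Γ(2−K) · ∫_{t^{2H}}^{(t+h)^{2H}} ∫_{t^{2H}}^{(t+h)^{2H}} (u+v)^{K−2} du dv ≤ Γ(2−K) · C′_K · 2^{2HK} · h^{2HK}, where C′_K := ∫₀¹∫₀¹ (x+y)^{K−2} dx dy. -/
open MeasureTheory Set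

lemma aux_integrable {K : ℝ} (hK0 : 0 < K) (hK2 : K < 2) :
    IntegrableOn (fun p : ℝ × ℝ => (p.1 + p.2) ^ (K - 2))
      (Set.Ioc (0:ℝ) 1 ×ˢ Set.Ioc (0:ℝ) 1) (volume.prod volume) := by
  have hmeas : Measurable (fun p : ℝ × ℝ => (p.1 + p.2) ^ (K - 2)) :=
    (measurable_fst.add measurable_snd).pow measurable_const
  have hg1 : IntegrableOn (fun x : ℝ => x ^ (K/2 - 1)) (Set.Ioc (0:ℝ) 1) volume :=
    (intervalIntegral.intervalIntegrable_rpow' (a := 0) (b := 1) (by linarith)).1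
  have hg : IntegrableOn (fun p : ℝ × ℝ => p.1 ^ (K/2-1) * p.2 ^ (K/2-1))
      (Set.Ioc (0:ℝ) 1 ×ˢ Set.Ioc (0:ℝ) 1) (volume.prod volume) := by
    rw [IntegrableOn, ← Measure.prod_restrict]
    exact hg1.mul_prod hg1
  refine hg.integrable.mono' (hmeas.aestronglyMeasurable.restrict) ?_
  filter_upwards [ae_restrict_mem (measurableSet_Ioc.prod measurableSet_Ioc)] with p hp
  obtain ⟨hp1, hp2⟩ := hp
  have h1 : 0 < p.1 := hp1.1
  have h2 : 0 < p.2 := hp2.1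
  have hsum : 0 < p.1 + p.2 := by linarith
  rw [Real.norm_eq_abs, abs_of_nonneg (Real.rpow_nonneg hsum.le _)]
  have : (p.1 + p.2) ^ (K - 2) = (p.1 + p.2) ^ (K/2-1) * (p.1 + p.2) ^ (K/2-1) := by
    rw [← Real.rpow_add hsum]; ring_nf
  rw [this]
  have e1 : (p.1 + p.2) ^ (K/2-1) ≤ p.1 ^ (K/2-1) :=
    Real.rpow_le_rpow_of_nonpos h1 (by linarith) (by linarith)
  have e2 : (p.1 + p.2) ^ (K/2-1) ≤ p.2 ^ (K/2-1) :=
    Real.rpow_le_rpow_of_nonpos h2 (by linarith) (by linarith)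
  exact mul_le_mul e1 e2 (Real.rpow_nonneg hsum.le _) (Real.rpow_nonneg h1.le _)

theorem stmt_10 (H K h t : ℝ) (hH0 : 0 < H) (hH1 : H < 1) (hK0 : 0 < K) (hK2 : K < 2)
    (hh0 : 0 < h) (hh : h < 1/2) (ht0 : 0 ≤ t) (hth : t ≤ h) :
    Real.Gamma (2 - K) *
        ∫ u in (t ^ (2*H))..((t + h) ^ (2*H)),
          ∫ v in (t ^ (2*H))..((t + h) ^ (2*H)), (u + v) ^ (K - 2)
      ≤ Real.Gamma (2 - K) *
          (∫ x in (0:ℝ)..1, ∫ y in (0:ℝ)..1, (x + y) ^ (K - 2)) *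
          2 ^ (2 * H * K) * h ^ (2 * H * K) := by
  have h2H : 0 < 2*H := by linarith
  set a := t ^ (2*H) with ha_def
  set b := (t+h) ^ (2*H) with hb_def
  have hth0 : 0 < t + h := by linarith
  have hb : 0 < b := Real.rpow_pos_of_pos hth0 _
  have ha : 0 ≤ a := Real.rpow_nonneg ht0 _
  have hab : a ≤ b := Real.rpow_le_rpow ht0 (by linarith) h2H.le
  set c := a / b with hc_def
  have hc0 : 0 ≤ c := div_nonneg ha hb.le
  have hc1 : c ≤ 1 := (div_le_one hb).2 hab
  have hbc : b * c = a := by rw [hc_def]; field_simp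
  -- scaling of a single interval integral
  have houter : ∀ F : ℝ → ℝ, (∫ u in a..b, F u) = b * ∫ x in c..1, F (b*x) := by
    intro F
    have := intervalIntegral.smul_integral_comp_mul_left (a := c) (b := 1) F b
    rw [hbc, mul_one, smul_eq_mul] at this
    exact this.symm
  have key : (∫ u in a..b, ∫ v in a..b, (u+v)^(K-2))
      = b ^ K * ∫ x in c..1, ∫ y in c..1, (x+y)^(K-2) := by
    rw [houter]
    have hinner : ∀ x ∈ Set.uIcc c 1,
        (∫ v in a..b, (b*x + v)^(K-2)) = b^(K-1) * ∫ y in c..1, (x+y)^(K-2) := by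
      intro x hx
      rw [Set.uIcc_of_le hc1] at hx
      have hx0 : 0 ≤ x := le_trans hc0 hx.1
      rw [houter]
      have : ∀ y ∈ Set.uIcc c 1, (b*x + b*y)^(K-2) = b^(K-2) * (x+y)^(K-2) := by
        intro y hy
        rw [Set.uIcc_of_le hc1] at hy
        have hy0 : 0 ≤ y := le_trans hc0 hy.1
        rw [show b*x + b*y = b*(x+y) by ring, Real.mul_rpow hb.le (by linarith)]
      rw [intervalIntegral.integral_congr this, intervalIntegral.integral_const_mul,
        ← mul_assoc]
      congr 1
      have e := Real.rpow_add hb 1 (K-2)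
      rw [show (1:ℝ)+(K-2) = K-1 by ring, Real.rpow_one] at e
      rw [e]
    rw [intervalIntegral.integral_congr hinner, intervalIntegral.integral_const_mul,
      ← mul_assoc]
    congr 1
    have e := Real.rpow_add hb 1 (K-1)
    rw [show (1:ℝ)+(K-1) = K by ring, Real.rpow_one] at e
    rw [e]
  have hf01 := aux_integrable hK0 hK2
  have hJ : (∫ x in c..1, ∫ y in c..1, (x+y)^(K-2))
      ≤ ∫ x in (0:ℝ)..1, ∫ y in (0:ℝ)..1, (x+y)^(K-2) := by
    have hfc : IntegrableOn (fun p : ℝ × ℝ => (p.1 + p.2) ^ (K - 2))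
        (Set.Ioc c 1 ×ˢ Set.Ioc c 1) (volume.prod volume) :=
      hf01.mono_set (Set.prod_mono (Set.Ioc_subset_Ioc_left hc0) (Set.Ioc_subset_Ioc_left hc0))
    simp_rw [intervalIntegral.integral_of_le hc1, intervalIntegral.integral_of_le
      (zero_le_one (α := ℝ))]
    rw [← setIntegral_prod _ hfc, ← setIntegral_prod _ hf01]
    refine setIntegral_mono_set hf01.integrable ?_ ?_
    · filter_upwards [ae_restrict_mem (measurableSet_Ioc.prod measurableSet_Ioc)] with p hp
      exact Real.rpow_nonneg (by have := hp.1.1; have := hp.2.1; linarith) _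
    · exact HasSubset.Subset.eventuallyLE
        (Set.prod_mono (Set.Ioc_subset_Ioc_left hc0) (Set.Ioc_subset_Ioc_left hc0))
  have hJ0 : 0 ≤ ∫ x in c..1, ∫ y in c..1, (x+y)^(K-2) := by
    apply intervalIntegral.integral_nonneg hc1
    intro x hx
    apply intervalIntegral.integral_nonneg hc1
    intro y hy
    exact Real.rpow_nonneg (by linarith [hx.1, hy.1]) _
  have hbK : b ^ K ≤ 2 ^ (2*H*K) * h ^ (2*H*K) := by
    have h1 : b ≤ (2*h) ^ (2*H) := Real.rpow_le_rpow hth0.le (by linarith) h2H.le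
    calc b ^ K ≤ ((2*h)^(2*H))^K := Real.rpow_le_rpow hb.le h1 hK0.le
      _ = (2*h) ^ (2*H*K) := by rw [← Real.rpow_mul (by linarith)]
      _ = 2 ^ (2*H*K) * h ^ (2*H*K) := Real.mul_rpow (by norm_num) hh0.le
  have hΓ : 0 < Real.Gamma (2-K) := Real.Gamma_pos_of_pos (by linarith)
  rw [key]
  calc Real.Gamma (2-K) * (b^K * ∫ x in c..1, ∫ y in c..1, (x+y)^(K-2))
      ≤ Real.Gamma (2-K) * ((2^(2*H*K) * h^(2*H*K)) *
          ∫ x in (0:ℝ)..1, ∫ y in (0:ℝ)..1, (x+y)^(K-2)) := by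
        apply mul_le_mul_of_nonneg_left ?_ hΓ.le
        exact mul_le_mul hbK hJ hJ0 (by positivity)
    _ = Real.Gamma (2 - K) *
          (∫ x in (0:ℝ)..1, ∫ y in (0:ℝ)..1, (x + y) ^ (K - 2)) *
          2 ^ (2 * H * K) * h ^ (2 * H * K) := by ring
end

section
/- Let H ∈ (0,1) and K ∈ (0,2). For all reals h, t with 0 < h < 1/2 and h ≤ t ≤ 1 − h, one has Γ(2−K) · ∫_{t^{2H}}^{(t+h)^{2H}} ∫_{t^{2H}}^{(t+h)^{2H}} (u+v)^{K−2} du dv ≤ Γ(2−K) · 2^{K−2} · (H · 2^{max(1,2H)})² · t^{−2(1−HK)} · h². -/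
open Real MeasureTheory intervalIntegral

theorem stmt_11 (H K h t : ℝ) (hH0 : 0 < H) (hH1 : H < 1) (hK0 : 0 < K) (hK2 : K < 2)
    (hh0 : 0 < h) (hh : h < 1/2) (hht : h ≤ t) (ht1 : t ≤ 1 - h) :
    Real.Gamma (2 - K) *
        ∫ u in (t ^ (2*H))..((t + h) ^ (2*H)),
          ∫ v in (t ^ (2*H))..((t + h) ^ (2*H)), (u + v) ^ (K - 2)
      ≤ Real.Gamma (2 - K) * 2 ^ (K - 2) * (H * 2 ^ (max 1 (2 * H))) ^ 2 *
          t ^ (-(2 * (1 - H * K))) * h ^ 2 := by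
  have ht0 : 0 < t := lt_of_lt_of_le hh0 hht
  have hth : 0 < t + h := by linarith
  set a := t ^ (2*H) with ha
  set b := (t+h) ^ (2*H) with hb
  have ha0 : 0 < a := Real.rpow_pos_of_pos ht0 _
  have hab : a ≤ b := Real.rpow_le_rpow ht0.le (by linarith) (by positivity)
  set C : ℝ := (2:ℝ) ^ (max 1 (2*H) - 1) * t ^ (2*H-1) with hCdef
  have hC0 : 0 ≤ C := by positivity
  -- pointwise bound on the derivative
  have hC : ∀ s ∈ Set.Icc t (t+h), s ^ (2*H-1) ≤ C := by
    intro s hs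
    rcases le_total 1 (2*H) with h1 | h1
    · rw [hCdef, max_eq_right h1]
      have h2 : (2:ℝ) ^ (2*H-1) * t ^ (2*H-1) = (2*t) ^ (2*H-1) :=
        (Real.mul_rpow (by norm_num) ht0.le).symm
      rw [h2]
      exact Real.rpow_le_rpow (le_trans ht0.le hs.1) (by linarith [hs.2]) (by linarith)
    · rw [hCdef, max_eq_left h1]
      simpa using Real.rpow_le_rpow_of_nonpos ht0 hs.1 (by linarith)
  -- FTC computation
  have hint : ∫ s in t..(t+h), s ^ (2*H-1) = (b - a) / (2*H) := by
    have h2 : 2*H - 1 + 1 = 2*H := by ring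
    rw [integral_rpow (Or.inl (by linarith)), h2]
  have hintble : IntervalIntegrable (fun s : ℝ => s ^ (2*H-1)) volume t (t+h) := by
    apply ContinuousOn.intervalIntegrable
    apply ContinuousOn.rpow_const continuousOn_id
    intro x hx
    rw [Set.uIcc_of_le (by linarith : t ≤ t + h)] at hx
    exact Or.inl (ne_of_gt (lt_of_lt_of_le ht0 hx.1))
  have hmono : ∫ s in t..(t+h), s ^ (2*H-1) ≤ h * C := by
    calc ∫ s in t..(t+h), s ^ (2*H-1) ≤ ∫ _s in t..(t+h), C := by
          apply intervalIntegral.integral_mono_on (by linarith) hintble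
            intervalIntegrable_const hC
      _ = h * C := by rw [intervalIntegral.integral_const, smul_eq_mul]; ring
  have key1 : b - a ≤ H * 2 ^ (max 1 (2 * H)) * t ^ (2*H-1) * h := by
    have hba : b - a = 2*H * ∫ s in t..(t+h), s ^ (2*H-1) := by
      rw [hint]; field_simp
    have h2 : (2:ℝ) ^ (max 1 (2*H) - 1) = 2 ^ (max 1 (2*H)) / 2 := by
      rw [Real.rpow_sub (by norm_num), Real.rpow_one]
    rw [hba]
    calc 2*H * ∫ s in t..(t+h), s ^ (2*H-1) ≤ 2*H * (h * C) := by
          apply mul_le_mul_of_nonneg_left hmono (by linarith)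
      _ = H * 2 ^ (max 1 (2 * H)) * t ^ (2*H-1) * h := by
          rw [hCdef, h2]; ring
  have hba0 : 0 ≤ b - a := by linarith
  -- pointwise bound on the integrand
  have hpt : ∀ u ∈ Set.Icc a b, ∀ v ∈ Set.Icc a b, (u+v) ^ (K-2) ≤ (2*a) ^ (K-2) := by
    intro u hu v hv
    exact Real.rpow_le_rpow_of_nonpos (by linarith) (by linarith [hu.1, hv.1]) (by linarith)
  have hinnerint : ∀ u ∈ Set.Icc a b,
      IntervalIntegrable (fun v : ℝ => (u+v) ^ (K-2)) volume a b := by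
    intro u hu
    apply ContinuousOn.intervalIntegrable
    apply ContinuousOn.rpow_const (by fun_prop)
    intro x hx
    rw [Set.uIcc_of_le hab] at hx
    exact Or.inl (by nlinarith [hu.1, hx.1])
  set g : ℝ → ℝ := fun u => ∫ v in a..b, (u+v) ^ (K-2) with hg
  have hganti : AntitoneOn g (Set.Icc a b) := by
    intro u1 hu1 u2 hu2 h12
    apply intervalIntegral.integral_mono_on hab (hinnerint u2 hu2) (hinnerint u1 hu1)
    intro v hv
    exact Real.rpow_le_rpow_of_nonpos (by linarith [hu1.1, hv.1]) (by linarith) (by linarith)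
  have hgle : ∀ u ∈ Set.Icc a b, g u ≤ (b - a) * (2*a) ^ (K-2) := by
    intro u hu
    calc g u ≤ ∫ _v in a..b, (2*a) ^ (K-2) :=
          intervalIntegral.integral_mono_on hab (hinnerint u hu)
            intervalIntegrable_const (hpt u hu)
      _ = (b - a) * (2*a) ^ (K-2) := by
          rw [intervalIntegral.integral_const, smul_eq_mul]
  have key2 : (∫ u in a..b, g u) ≤ (b - a) * ((b - a) * (2*a) ^ (K-2)) := by
    calc (∫ u in a..b, g u) ≤ ∫ _u in a..b, (b - a) * (2*a) ^ (K-2) := by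
          apply intervalIntegral.integral_mono_on hab _ intervalIntegrable_const hgle
          exact (hganti.mono (by rw [Set.uIcc_of_le hab])).intervalIntegrable
      _ = (b - a) * ((b - a) * (2*a) ^ (K-2)) := by
          rw [intervalIntegral.integral_const, smul_eq_mul]
  -- assemble
  have hGamma : 0 < Real.Gamma (2 - K) := Real.Gamma_pos_of_pos (by linarith)
  have hsplit : ((2:ℝ)*a) ^ (K-2) = 2 ^ (K-2) * a ^ (K-2) :=
    Real.mul_rpow (by norm_num) ha0.le
  have hexp : a ^ (K-2) * (t ^ (2*H-1)) ^ 2 = t ^ (-(2 * (1 - H * K))) := by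
    rw [ha, ← Real.rpow_natCast (t ^ (2*H-1)) 2, ← Real.rpow_mul ht0.le,
      ← Real.rpow_mul ht0.le, ← Real.rpow_add ht0]
    norm_num
    ring_nf
  have hrhs : (b - a) * ((b - a) * (2*a) ^ (K-2)) ≤
      2 ^ (K - 2) * (H * 2 ^ (max 1 (2 * H))) ^ 2 * t ^ (-(2 * (1 - H * K))) * h ^ 2 := by
    have hsq : (b - a) * (b - a) ≤ (H * 2 ^ (max 1 (2 * H)) * t ^ (2*H-1) * h) ^ 2 := by
      have h0 : 0 ≤ H * 2 ^ (max 1 (2 * H)) * t ^ (2*H-1) * h := by positivity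
      nlinarith
    calc (b - a) * ((b - a) * (2*a) ^ (K-2))
        ≤ (H * 2 ^ (max 1 (2 * H)) * t ^ (2*H-1) * h) ^ 2 * (2*a) ^ (K-2) := by
          have : 0 ≤ (2*a) ^ (K-2) := by positivity
          nlinarith
      _ = 2 ^ (K - 2) * (H * 2 ^ (max 1 (2 * H))) ^ 2 *
            (a ^ (K-2) * (t ^ (2*H-1)) ^ 2) * h ^ 2 := by
          rw [hsplit]; ring
      _ = 2 ^ (K - 2) * (H * 2 ^ (max 1 (2 * H))) ^ 2 * t ^ (-(2 * (1 - H * K))) * h ^ 2 := by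
          rw [hexp]
  have final : (∫ u in a..b, g u) ≤
      2 ^ (K - 2) * (H * 2 ^ (max 1 (2 * H))) ^ 2 * t ^ (-(2 * (1 - H * K))) * h ^ 2 :=
    le_trans key2 hrhs
  calc Real.Gamma (2 - K) * ∫ u in a..b, g u
      ≤ Real.Gamma (2 - K) *
        (2 ^ (K - 2) * (H * 2 ^ (max 1 (2 * H))) ^ 2 * t ^ (-(2 * (1 - H * K))) * h ^ 2) :=
        mul_le_mul_of_nonneg_left final hGamma.le
    _ = Real.Gamma (2 - K) * 2 ^ (K - 2) * (H * 2 ^ (max 1 (2 * H))) ^ 2 *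
          t ^ (-(2 * (1 - H * K))) * h ^ 2 := by ring
end

section
/- Let λ ∈ (0,1) and set p₀ := ⌊1/λ⌋ + 1. For each integer p ≥ 1 define η_{n,p} := 2^{−n} + (log 2) · n · 2^{−nλp} if λp ≤ 1, and η_{n,p} := (λp/(λp−1)) · 2^{−n} if λp > 1. Then sup over integers p ≥ 1 of ∑_{n=0}^∞ η_{n,p} is at most 2·(1 + 1/(λp₀ − 1)) + 2 + (log 2) · 2^{−λ} / (1 − 2^{−λ})². -/
/-!
For `l * p ≤ 1` the series is a geometric series plus `log 2 · ∑ n xⁿ = log 2 · x / (1 - x)²` with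
`x = 2^(-l p) ≤ 2^(-l)`, and `x / (1 - x)²` is increasing in `x`. For `l * p > 1` the series is
`2 · l p / (l p - 1) = 2 (1 + 1 / (l p - 1))`, which decreases in `l p`, and `p ≥ p₀` in that case.
-/

open Real

namespace Real

lemma rpow_neg_natCast_mul {b : ℝ} (hb : 0 ≤ b) (s : ℝ) (n : ℕ) :
    b ^ (-(n * s)) = (b ^ (-s)) ^ n := by
  rw [← rpow_mul_natCast hb]
  ring_nf

lemma rpow_neg_lt_one {b s : ℝ} (hb : 1 < b) (hs : 0 < s) : b ^ (-s) < 1 :=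
  rpow_lt_one_of_one_lt_of_neg hb (neg_neg_of_pos hs)

lemma hasSum_rpow_neg_natCast {b : ℝ} (hb : 1 < b) :
    HasSum (fun n : ℕ => b ^ (-(n : ℝ))) (1 - b⁻¹)⁻¹ := by
  have hgeom := hasSum_geometric_of_lt_one (inv_nonneg.2 (zero_le_one.trans hb.le))
    (inv_lt_one_of_one_lt₀ hb)
  convert hgeom using 2 with n
  simp [rpow_neg_natCast]

lemma hasSum_two_rpow_neg_natCast : HasSum (fun n : ℕ => (2 : ℝ) ^ (-(n : ℝ))) 2 := by
  convert hasSum_rpow_neg_natCast one_lt_two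
  norm_num

lemma hasSum_natCast_mul_rpow_neg {b s : ℝ} (hb : 1 < b) (hs : 0 < s) :
    HasSum (fun n : ℕ => n * b ^ (-(n * s))) (b ^ (-s) / (1 - b ^ (-s)) ^ 2) := by
  have hnorm : ‖b ^ (-s)‖ < 1 := by
    rw [norm_of_nonneg (rpow_nonneg (zero_le_one.trans hb.le) _)]
    exact rpow_neg_lt_one hb hs
  simpa only [rpow_neg_natCast_mul (zero_le_one.trans hb.le)]
    using hasSum_coe_mul_geometric_of_norm_lt_one hnorm

end Real

lemma div_one_sub_sq_le_div_one_sub_sq {x y : ℝ} (hx : 0 ≤ x) (hxy : x ≤ y) (hy : y < 1) :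
    x / (1 - x) ^ 2 ≤ y / (1 - y) ^ 2 :=
  div_le_div₀ (hx.trans hxy) hxy (pow_pos (by linarith) 2) (by gcongr)

lemma one_lt_mul_floor_one_div_add_one {l : ℝ} (hl : 0 < l) :
    1 < l * ((⌊1 / l⌋₊ + 1 : ℕ) : ℝ) := by
  have h : 1 / l < ((⌊1 / l⌋₊ + 1 : ℕ) : ℝ) := by
    push_cast
    exact Nat.lt_floor_add_one _
  rwa [div_lt_iff₀ hl, mul_comm] at h

lemma floor_one_div_add_one_le {l : ℝ} (hl : 0 < l) {p : ℕ} (hp : 1 < l * p) :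
    ⌊1 / l⌋₊ + 1 ≤ p := by
  have h : 1 / l < p := by rwa [div_lt_iff₀ hl, mul_comm]
  exact Nat.floor_lt (by positivity) |>.2 h

lemma tsum_two_rpow_neg_add_log_two_mul_le {l s : ℝ} (hl : 0 < l) (hls : l ≤ s) :
    ∑' n : ℕ, ((2 : ℝ) ^ (-(n : ℝ)) + log 2 * n * (2 : ℝ) ^ (-(n * s)))
      ≤ 2 + log 2 * (2 : ℝ) ^ (-l) / (1 - (2 : ℝ) ^ (-l)) ^ 2 := by
  have harith := (hasSum_natCast_mul_rpow_neg one_lt_two (hl.trans_le hls)).mul_left (log 2)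
  have hmono : (2 : ℝ) ^ (-s) / (1 - 2 ^ (-s)) ^ 2 ≤ 2 ^ (-l) / (1 - 2 ^ (-l)) ^ 2 :=
    div_one_sub_sq_le_div_one_sub_sq (by positivity)
      (rpow_le_rpow_of_exponent_le one_le_two (neg_le_neg hls)) (rpow_neg_lt_one one_lt_two hl)
  simp only [mul_assoc] at harith ⊢
  rw [(hasSum_two_rpow_neg_natCast.add harith).tsum_eq, mul_div_assoc, add_le_add_iff_left]
  exact mul_le_mul_of_nonneg_left hmono (log_nonneg one_le_two)

lemma tsum_mul_two_rpow_neg_le {t₀ t : ℝ} (ht₀ : 1 < t₀) (ht : t₀ ≤ t) :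
    ∑' n : ℕ, t / (t - 1) * (2 : ℝ) ^ (-(n : ℝ)) ≤ 2 * (1 + 1 / (t₀ - 1)) := by
  rw [(hasSum_two_rpow_neg_natCast.mul_left _).tsum_eq]
  have hsplit : t / (t - 1) = 1 + 1 / (t - 1) := by
    field_simp [(by linarith : t - 1 ≠ 0)]
    ring
  have hanti : 1 / (t - 1) ≤ 1 / (t₀ - 1) :=
    one_div_le_one_div_of_le (by linarith) (by linarith)
  rw [hsplit]
  linarith

theorem stmt_18_general (l : ℝ) (hl0 : 0 < l)
    (p₀ : ℕ) (hp₀ : p₀ = ⌊1 / l⌋₊ + 1)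
    (η : ℕ → ℕ → ℝ)
    (hη : ∀ n p : ℕ, η n p =
      if l * p ≤ 1 then
        (2:ℝ) ^ (-(n:ℝ)) + Real.log 2 * n * (2:ℝ) ^ (-((n:ℝ) * (l * p)))
      else (l * p / (l * p - 1)) * (2:ℝ) ^ (-(n:ℝ))) :
    ∀ p : ℕ, 1 ≤ p →
      ∑' n : ℕ, η n p
        ≤ 2 * (1 + 1 / (l * p₀ - 1)) + 2 +
            Real.log 2 * (2:ℝ) ^ (-l) / (1 - (2:ℝ) ^ (-l)) ^ 2 := by
  intro p hp
  subst hp₀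
  have hp₀ := one_lt_mul_floor_one_div_add_one hl0
  by_cases hc : l * p ≤ 1
  · have hl : l ≤ l * p := le_mul_of_one_le_right hl0.le (by exact_mod_cast hp)
    simp only [hη, if_pos hc]
    have hsub := tsum_two_rpow_neg_add_log_two_mul_le hl0 hl
    have hsuper : 0 ≤ 2 * (1 + 1 / (l * ((⌊1 / l⌋₊ + 1 : ℕ) : ℝ) - 1)) := by
      have := one_div_pos.2 (sub_pos.2 hp₀)
      linarith
    linarith
  · push Not at hc
    have hpp : l * ((⌊1 / l⌋₊ + 1 : ℕ) : ℝ) ≤ l * p :=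
      mul_le_mul_of_nonneg_left (by exact_mod_cast floor_one_div_add_one_le hl0 hc) hl0.le
    simp only [hη, if_neg (not_le.2 hc)]
    have hsuper := tsum_mul_two_rpow_neg_le hp₀ hpp
    have hsub : 0 ≤ log 2 * (2 : ℝ) ^ (-l) / (1 - (2 : ℝ) ^ (-l)) ^ 2 := by positivity
    linarith

theorem stmt_18 (l : ℝ) (hl0 : 0 < l) (hl1 : l < 1)
    (p₀ : ℕ) (hp₀ : p₀ = ⌊1 / l⌋₊ + 1)
    (η : ℕ → ℕ → ℝ)
    (hη : ∀ n p : ℕ, η n p =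
      if l * p ≤ 1 then
        (2:ℝ) ^ (-(n:ℝ)) + Real.log 2 * n * (2:ℝ) ^ (-((n:ℝ) * (l * p)))
      else (l * p / (l * p - 1)) * (2:ℝ) ^ (-(n:ℝ))) :
    ∀ p : ℕ, 1 ≤ p →
      ∑' n : ℕ, η n p
        ≤ 2 * (1 + 1 / (l * p₀ - 1)) + 2 +
            Real.log 2 * (2:ℝ) ^ (-l) / (1 - (2:ℝ) ^ (-l)) ^ 2 :=
  stmt_18_general l hl0 p₀ hp₀ η hη
end
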